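/- For an elementary abelian 2-group V and any integer n > 0, there is a short exact sequence 0 → 2·I(V)^n → I(V)^{n+1} → Ī(V)^{n+1} → 0, where Ī(V)^{n+1} denotes the (n+1)-st power of the augmentation ideal of the mod 2 group algebra F_2[V]; equivalently, the image of I(V)^{n+1} in F_2[V] under reduction mod 2 is Ī(V)^{n+1}, with kernel 2·I(V)^n. -/

import Mathlib

/-- The augmentation map of the integral group ring `ℤ[V]`. -/
noncomputable def augZ (V : Type) [AddCommGroup V] :
    AddMonoidAlgebra ℤ V →ₐ[ℤ] ℤ :=
  AddMonoidAlgebra.lift ℤ ℤ V 1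

/-- The augmentation ideal `I(V)` of `ℤ[V]`. -/
noncomputable def augIdealZ (V : Type) [AddCommGroup V] :
    Ideal (AddMonoidAlgebra ℤ V) :=
  RingHom.ker (augZ V).toRingHom

/-- The augmentation map of the mod 2 group algebra `𝔽₂[V]`. -/
noncomputable def aug2 (V : Type) [AddCommGroup V] :
    AddMonoidAlgebra (ZMod 2) V →ₐ[ZMod 2] ZMod 2 :=
  AddMonoidAlgebra.lift (ZMod 2) (ZMod 2) V 1

/-- The augmentation ideal `Ī(V)` of `𝔽₂[V]`. -/
noncomputable def augIdeal2 (V : Type) [AddCommGroup V] :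
    Ideal (AddMonoidAlgebra (ZMod 2) V) :=
  RingHom.ker (aug2 V).toRingHom

/-- Reduction mod 2, `ℤ[V] → 𝔽₂[V]`. -/
noncomputable def red2 (V : Type) [AddCommGroup V] :
    AddMonoidAlgebra ℤ V →+* AddMonoidAlgebra (ZMod 2) V :=
  (AddMonoidAlgebra.lift ℤ (AddMonoidAlgebra (ZMod 2) V) V
    (AddMonoidAlgebra.of (ZMod 2) V)).toRingHom

/-!
Choose an `𝔽₂`-basis `(b i)` of `V` and put `x_i = [b_i] - 1`, `a_S = ∏_{i ∈ S} x_i`. Since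
`[b_i]² = 1`, `x_i² = -2 x_i`; and `[g] = ∏_{i ∈ supp g} (1 + x_i) = ∑_{S ⊆ supp g} a_S`, so the
`a_S` span `ℤ[V]` and the `x_i` generate `I(V)`. In coefficients `c_S` with respect to the `a_S`,
`c_{S ∪ {i}}(x x_i) = c_S(x) - 2 c_{S ∪ {i}}(x)` for `i ∉ S`, and `c_S(x x_i) = 0`. Hence `I(V)^m`
consists of the `x` with `c_∅(x) = 0` and `2^(m - |S|) ∣ c_S(x)` for all `S` (conversely,
`2([g] - 1) = -([g] - 1)²` gives `2 I ⊆ I²`, so `2^k a_S ∈ I^(|S| + k)` for `S ≠ ∅`). In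
particular `2w ∈ I^(n+1)` forces `w ∈ I^n`, which is the kernel statement; the image statement
holds because reduction mod 2 is surjective and maps the generators `[g] - 1` of `I(V)` to those
of `Ī(V)`.
-/

open AddMonoidAlgebra

section GroupRing

variable {R V : Type} [CommRing R] [AddCommGroup V]

theorem ker_lift_one_eq_span :
    RingHom.ker (AddMonoidAlgebra.lift R R V 1).toRingHom =
      Ideal.span (Set.range fun g : V => (single g 1 - 1 : AddMonoidAlgebra R V)) := by
  refine le_antisymm (fun x hx => ?_) (Ideal.span_le.2 ?_)
  · have sub_aug_mem (y : AddMonoidAlgebra R V) :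
        y - single 0 (AddMonoidAlgebra.lift R R V 1 y) ∈
          Ideal.span (Set.range fun g : V => (single g 1 - 1 : AddMonoidAlgebra R V)) := by
      induction y using AddMonoidAlgebra.induction_linear with
      | zero => simp
      | add y z hy hz =>
        simpa [map_add, single_add, add_sub_add_comm] using Ideal.add_mem _ hy hz
      | single g c =>
        have : single g c - single 0 c = single 0 c * (single g 1 - 1 : AddMonoidAlgebra R V) := by
          rw [mul_sub, single_mul_single, zero_add, mul_one, mul_one]
        rw [lift_single, MonoidHom.one_apply, smul_eq_mul, mul_one, this]
        exact Ideal.mul_mem_left _ (single 0 c) (Ideal.subset_span (Set.mem_range_self g))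
    have hx : AddMonoidAlgebra.lift R R V 1 x = 0 := hx
    simpa [hx] using sub_aug_mem x
  · rintro _ ⟨g, rfl⟩
    simp [RingHom.mem_ker]

end GroupRing

section Reduction

variable {V : Type} [AddCommGroup V]

theorem augIdealZ_eq_span :
    augIdealZ V = Ideal.span (Set.range fun g : V => (single g 1 - 1 : AddMonoidAlgebra ℤ V)) :=
  ker_lift_one_eq_span

theorem augIdeal2_eq_span :
    augIdeal2 V =
      Ideal.span (Set.range fun g : V => (single g 1 - 1 : AddMonoidAlgebra (ZMod 2) V)) :=
  ker_lift_one_eq_span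

theorem red2_eq_mapRingHom : red2 V = mapRingHom V (Int.castRingHom (ZMod 2)) :=
  ringHom_ext (fun c => by simp [red2, AddMonoidAlgebra.lift_single]) fun g => by simp [red2]

theorem red2_surjective : Function.Surjective (red2 V) := by
  rw [red2_eq_mapRingHom]
  exact map_surjective _ ZMod.intCast_surjective

theorem map_red2_augIdealZ : (augIdealZ V).map (red2 V) = augIdeal2 V := by
  rw [augIdealZ_eq_span, augIdeal2_eq_span, Ideal.map_span, ← Set.range_comp]
  simp [red2_eq_mapRingHom, Function.comp_def]

theorem red2_eq_zero_iff {x : AddMonoidAlgebra ℤ V} : red2 V x = 0 ↔ ∃ w, x = 2 * w := by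
  refine ⟨fun hx => ?_, ?_⟩
  · have coeff_even (g : V) : 2 ∣ x.coeff g := by
      have := congr_arg (fun y => y.coeff g) hx
      simpa [red2_eq_mapRingHom, ZMod.intCast_zmod_eq_zero_iff_dvd] using this
    refine ⟨ofCoeff (Finsupp.mapRange (· / 2) (Int.zero_ediv 2) x.coeff), ?_⟩
    ext g
    simp only [two_mul, coeff_add, Finsupp.coe_add, Pi.add_apply, Finsupp.mapRange_apply]
    have := coeff_even g
    omega
  · rintro ⟨w, rfl⟩
    ext g
    simp [red2_eq_mapRingHom, two_mul, CharTwo.add_self_eq_zero]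

end Reduction

section ElementaryAbelian

variable {V : Type} [AddCommGroup V] [Module (ZMod 2) V]

theorem single_one_mul_self {R : Type} [Semiring R] (g : V) :
    (single g 1 * single g 1 : AddMonoidAlgebra R V) = 1 := by
  have hg : g + g = 0 := by
    rw [← two_smul (ZMod 2) g, show (2 : ZMod 2) = 0 from rfl, zero_smul]
  rw [single_mul_single, hg, mul_one, one_def]

theorem two_mul_mem_augIdealZ_sq {y : AddMonoidAlgebra ℤ V} (hy : y ∈ augIdealZ V) :
    2 * y ∈ augIdealZ V ^ 2 := by
  rw [augIdealZ_eq_span] at hy ⊢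
  induction hy using Submodule.span_induction with
  | mem _ hy =>
    obtain ⟨g, rfl⟩ := hy
    have : 2 * (single g 1 - 1 : AddMonoidAlgebra ℤ V) = -(single g 1 - 1) ^ 2 := by
      linear_combination single_one_mul_self (R := ℤ) g
    rw [this]
    exact neg_mem (Ideal.pow_mem_pow (Ideal.subset_span (Set.mem_range_self g)) 2)
  | zero => simp
  | add y z _ _ hy hz => simpa [mul_add] using Ideal.add_mem _ hy hz
  | smul r y _ hy => simpa [mul_left_comm] using Ideal.mul_mem_left _ r hy

theorem two_mul_mem_augIdealZ_pow_succ {m : ℕ} (hm : 0 < m) {y : AddMonoidAlgebra ℤ V}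
    (hy : y ∈ augIdealZ V ^ m) : 2 * y ∈ augIdealZ V ^ (m + 1) := by
  obtain ⟨m, rfl⟩ := Nat.exists_eq_add_of_lt hm
  rw [zero_add, pow_succ] at hy
  refine Submodule.mul_induction_on hy (fun p hp q hq => ?_) fun a b ha hb => ?_
  · rw [mul_left_comm, zero_add, add_assoc, pow_add]
    exact Ideal.mul_mem_mul hp (two_mul_mem_augIdealZ_sq hq)
  · simpa [mul_add] using Ideal.add_mem _ ha hb

theorem two_pow_mul_mem_augIdealZ_pow {m : ℕ} (hm : 0 < m) {y : AddMonoidAlgebra ℤ V}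
    (hy : y ∈ augIdealZ V ^ m) (k : ℕ) : 2 ^ k * y ∈ augIdealZ V ^ (m + k) := by
  induction k with
  | zero => simpa using hy
  | succ k ih =>
    rw [pow_succ', mul_assoc, ← add_assoc]
    exact two_mul_mem_augIdealZ_pow_succ (by omega) ih

end ElementaryAbelian

noncomputable section Basis

open Finset
open scoped Classical

variable {V ι : Type} [AddCommGroup V] [Module (ZMod 2) V] (b : Module.Basis ι (ZMod 2) V)

def basisGen (i : ι) : AddMonoidAlgebra ℤ V := single (b i) 1 - 1

def basisMonomial (S : Finset ι) : AddMonoidAlgebra ℤ V := ∏ i ∈ S, basisGen b i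

theorem sum_support_repr (g : V) : ∑ i ∈ (b.repr g).support, b i = g := by
  conv_rhs => rw [← b.linearCombination_repr g, Finsupp.linearCombination_apply, Finsupp.sum]
  refine Finset.sum_congr rfl fun i hi => ?_
  have : b.repr g i = 1 := Fin.eq_one_of_ne_zero _ (Finsupp.mem_support_iff.1 hi)
  rw [this, one_smul]

theorem single_eq_prod_basis (g : V) :
    (single g 1 : AddMonoidAlgebra ℤ V) = ∏ i ∈ (b.repr g).support, single (b i) 1 := by
  rw [prod_single, prod_const_one, sum_support_repr]

theorem single_eq_sum_basisMonomial (g : V) :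
    (single g 1 : AddMonoidAlgebra ℤ V) = ∑ S ∈ (b.repr g).support.powerset, basisMonomial b S := by
  simp only [single_eq_prod_basis b g, basisMonomial, ← prod_add_one, basisGen, sub_add_cancel]

theorem basisGen_mem_augIdealZ (i : ι) : basisGen b i ∈ augIdealZ V := by
  rw [augIdealZ_eq_span]
  exact Ideal.subset_span (Set.mem_range_self _)

theorem basisMonomial_mem_augIdealZ_pow (S : Finset ι) : basisMonomial b S ∈ augIdealZ V ^ #S := by
  rw [← Finset.prod_const]
  exact Ideal.prod_mem_prod fun i _ => basisGen_mem_augIdealZ b i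

theorem augIdealZ_eq_span_basisGen : augIdealZ V = Ideal.span (Set.range (basisGen b)) := by
  refine le_antisymm ?_ (Ideal.span_le.2 (Set.range_subset_iff.2 (basisGen_mem_augIdealZ b)))
  rw [augIdealZ_eq_span, Ideal.span_le, Set.range_subset_iff]
  intro g
  rw [SetLike.mem_coe, ← Ideal.Quotient.eq, single_eq_prod_basis b g, map_prod, map_one]
  refine Finset.prod_eq_one fun i _ => (Ideal.Quotient.eq.2 ?_).trans (map_one _)
  exact Ideal.subset_span (Set.mem_range_self (f := basisGen b) i)

/-- `monomialCoords b x S` is the coefficient of `basisMonomial b S` in `x`, read off from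
`single_eq_sum_basisMonomial`. -/
def monomialCoords : AddMonoidAlgebra ℤ V →ₗ[ℤ] (Finset ι →₀ ℤ) :=
  Finsupp.linearCombination ℤ (fun g => ∑ S ∈ (b.repr g).support.powerset, Finsupp.single S 1) ∘ₗ
    (coeffLinearEquiv ℤ).toLinearMap

theorem monomialCoords_single (g : V) (c : ℤ) :
    monomialCoords b (single g c) = ∑ S ∈ (b.repr g).support.powerset, Finsupp.single S c := by
  simp [monomialCoords, coeffLinearEquiv, Finset.smul_sum]

theorem monomialCoords_single_apply (g : V) (c : ℤ) (S : Finset ι) :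
    monomialCoords b (single g c) S = if S ⊆ (b.repr g).support then c else 0 := by
  simp [monomialCoords_single, Finsupp.finsetSum_apply, Finsupp.single_apply]

theorem linearCombination_monomialCoords (x : AddMonoidAlgebra ℤ V) :
    Finsupp.linearCombination ℤ (basisMonomial b) (monomialCoords b x) = x := by
  induction x using AddMonoidAlgebra.induction_linear with
  | zero => simp
  | add x y hx hy => rw [map_add, map_add, hx, hy]
  | single g c =>
    simp only [monomialCoords_single, map_sum, Finsupp.linearCombination_single]
    rw [← Finset.smul_sum, ← single_eq_sum_basisMonomial, smul_single, smul_eq_mul, mul_one]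

theorem monomialCoords_empty (x : AddMonoidAlgebra ℤ V) : monomialCoords b x ∅ = augZ V x := by
  induction x using AddMonoidAlgebra.induction_linear with
  | zero => simp
  | add x y hx hy => rw [map_add, map_add, Finsupp.add_apply, hx, hy]
  | single g c => simp [monomialCoords_single_apply, augZ]

theorem mem_support_repr_add_basis (g : V) (i j : ι) :
    j ∈ (b.repr (g + b i)).support ↔ (j ∈ (b.repr g).support ↔ j ≠ i) := by
  simp only [Finsupp.mem_support_iff, map_add, b.repr_self, Finsupp.add_apply, Finsupp.single_apply]
  by_cases hji : j = i
  · subst hji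
    simp only [ne_eq, not_true_eq_false, iff_false, not_not]
    generalize b.repr g j = a
    revert a
    decide
  · simp [hji, Ne.symm hji]

theorem subset_support_repr_add_basis_iff {g : V} {i : ι} {S : Finset ι} (hi : i ∉ S) :
    S ⊆ (b.repr (g + b i)).support ↔ S ⊆ (b.repr g).support := by
  refine forall₂_congr fun j hj => ?_
  rw [mem_support_repr_add_basis]
  simp [show j ≠ i from fun h => hi (h ▸ hj)]

theorem insert_subset_support_repr_add_basis_iff {g : V} {i : ι} {S : Finset ι} (hi : i ∉ S) :
    insert i S ⊆ (b.repr (g + b i)).support ↔ i ∉ (b.repr g).support ∧ S ⊆ (b.repr g).support := by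
  rw [Finset.insert_subset_iff, subset_support_repr_add_basis_iff b hi, mem_support_repr_add_basis]
  simp

theorem single_mul_basisGen (g : V) (c : ℤ) (i : ι) :
    single g c * basisGen b i = single (g + b i) c - single g c := by
  rw [basisGen, mul_sub, single_mul_single, mul_one, mul_one]

theorem monomialCoords_mul_basisGen_of_notMem (x : AddMonoidAlgebra ℤ V) {i : ι} {S : Finset ι}
    (hi : i ∉ S) : monomialCoords b (x * basisGen b i) S = 0 := by
  induction x using AddMonoidAlgebra.induction_linear with
  | zero => simp
  | add x y hx hy => rw [add_mul, map_add, Finsupp.add_apply, hx, hy, add_zero]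
  | single g c =>
    simp only [single_mul_basisGen, map_sub, Finsupp.sub_apply, monomialCoords_single_apply,
      subset_support_repr_add_basis_iff b hi, sub_self]

theorem monomialCoords_mul_basisGen_insert (x : AddMonoidAlgebra ℤ V) {i : ι} {S : Finset ι}
    (hi : i ∉ S) : monomialCoords b (x * basisGen b i) (insert i S) =
      monomialCoords b x S - 2 * monomialCoords b x (insert i S) := by
  induction x using AddMonoidAlgebra.induction_linear with
  | zero => simp
  | add x y hx hy => simp only [add_mul, map_add, Finsupp.add_apply, hx, hy]; ring
  | single g c =>
    simp only [single_mul_basisGen, map_sub, Finsupp.sub_apply, monomialCoords_single_apply,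
      insert_subset_support_repr_add_basis_iff b hi, Finset.insert_subset_iff]
    by_cases hg : i ∈ (b.repr g).support <;> by_cases hS : S ⊆ (b.repr g).support <;>
      simp [hg, hS, two_mul]

/-- The coefficient of `basisMonomial b S` in `x` is divisible by `2 ^ (m - #S)`, written without
truncated subtraction. -/
def TwoPowDvdCoords (m : ℕ) (x : AddMonoidAlgebra ℤ V) : Prop :=
  ∀ S : Finset ι, 2 ^ m ∣ 2 ^ #S * monomialCoords b x S

theorem TwoPowDvdCoords.add {m : ℕ} {x y : AddMonoidAlgebra ℤ V} (hx : TwoPowDvdCoords b m x)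
    (hy : TwoPowDvdCoords b m y) : TwoPowDvdCoords b m (x + y) := fun S => by
  rw [map_add, Finsupp.add_apply, mul_add]
  exact dvd_add (hx S) (hy S)

theorem TwoPowDvdCoords.mul_basisGen {m : ℕ} {x : AddMonoidAlgebra ℤ V}
    (hx : TwoPowDvdCoords b m x) (i : ι) : TwoPowDvdCoords b (m + 1) (x * basisGen b i) := by
  intro U
  by_cases hiU : i ∈ U
  · obtain ⟨S, hiS, rfl⟩ : ∃ S, i ∉ S ∧ U = insert i S :=
      ⟨U.erase i, notMem_erase i U, (insert_erase hiU).symm⟩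
    have hS := hx S
    have hiS' := hx (insert i S)
    rw [card_insert_of_notMem hiS] at hiS' ⊢
    rw [monomialCoords_mul_basisGen_insert b x hiS, pow_succ',
      show 2 ^ (#S + 1) * (monomialCoords b x S - 2 * monomialCoords b x (insert i S)) =
        2 * (2 ^ #S * monomialCoords b x S) - 2 * (2 ^ (#S + 1) * monomialCoords b x (insert i S))
        by ring]
    exact dvd_sub (mul_dvd_mul_left 2 hS) (mul_dvd_mul_left 2 hiS')
  · rw [monomialCoords_mul_basisGen_of_notMem b x hiU, mul_zero]
    exact dvd_zero _

theorem twoPowDvdCoords_of_mem_pow {m : ℕ} {x : AddMonoidAlgebra ℤ V}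
    (hx : x ∈ augIdealZ V ^ m) : TwoPowDvdCoords b m x := by
  induction m generalizing x with
  | zero => exact fun S => by simp
  | succ m ih =>
    rw [pow_succ] at hx
    refine Submodule.mul_induction_on hx (fun p hp q hq => ?_) fun y z hy hz => hy.add b hz
    rw [augIdealZ_eq_span_basisGen b] at hq
    induction hq using Submodule.span_induction generalizing p with
    | mem _ hq =>
      obtain ⟨i, rfl⟩ := hq
      exact (ih hp).mul_basisGen b i
    | zero => exact fun S => by simp
    | add q r _ _ hq hr => rw [mul_add]; exact (hq p hp).add b (hr p hp)
    | smul r q _ hq => rw [smul_eq_mul, ← mul_assoc]; exact hq _ (Ideal.mul_mem_right r _ hp)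

theorem mem_augIdealZ_pow_of_twoPowDvdCoords {m : ℕ} {x : AddMonoidAlgebra ℤ V}
    (hx : TwoPowDvdCoords b m x) (h0 : augZ V x = 0) : x ∈ augIdealZ V ^ m := by
  rw [← linearCombination_monomialCoords b x, Finsupp.linearCombination_apply]
  refine Submodule.finsuppSum_mem _ _ _ _ fun S hS => ?_
  have hS0 : 0 < #S := by
    refine card_pos.2 (nonempty_iff_ne_empty.2 fun hS0 => ?_)
    rw [hS0, monomialCoords_empty, h0] at hS
    exact hS rfl
  have hmem := basisMonomial_mem_augIdealZ_pow b S
  rcases le_or_gt m #S with hmS | hSm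
  · exact Submodule.smul_of_tower_mem _ _ (Ideal.pow_le_pow_right hmS hmem)
  · obtain ⟨u, hu⟩ : 2 ^ (m - #S) ∣ monomialCoords b x S := by
      have h := hx S
      rw [← Nat.add_sub_of_le hSm.le, pow_add] at h
      exact (mul_dvd_mul_iff_left (pow_ne_zero _ two_ne_zero)).1 h
    rw [hu, mul_comm, mul_smul]
    refine Submodule.smul_of_tower_mem _ u ?_
    rw [zsmul_eq_mul, Int.cast_pow, Int.cast_ofNat]
    have := two_pow_mul_mem_augIdealZ_pow hS0 hmem (m - #S)
    rwa [show #S + (m - #S) = m by omega] at this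

end Basis

theorem mem_augIdealZ_pow_of_two_mul_mem {V : Type} [AddCommGroup V] [Module (ZMod 2) V] {n : ℕ}
    {w : AddMonoidAlgebra ℤ V} (hw : 2 * w ∈ augIdealZ V ^ (n + 1)) : w ∈ augIdealZ V ^ n := by
  let b := Module.Basis.ofVectorSpace (ZMod 2) V
  refine mem_augIdealZ_pow_of_twoPowDvdCoords b (fun S => ?_) ?_
  · have h := twoPowDvdCoords_of_mem_pow b hw S
    rw [two_mul, map_add, Finsupp.add_apply, ← two_mul, mul_left_comm, pow_succ'] at h
    exact (mul_dvd_mul_iff_left two_ne_zero).1 h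
  · have h : augZ V (2 * w) = 0 := Ideal.pow_le_self n.succ_ne_zero hw
    rw [map_mul, map_ofNat] at h
    exact (mul_eq_zero.1 h).resolve_left two_ne_zero

theorem stmt2_general (V : Type) [AddCommGroup V] [Module (ZMod 2) V] (n : ℕ) :
    (red2 V '' ((augIdealZ V ^ (n + 1) : Ideal (AddMonoidAlgebra ℤ V)) : Set (AddMonoidAlgebra ℤ V))
        = ((augIdeal2 V ^ (n + 1) : Ideal (AddMonoidAlgebra (ZMod 2) V)) :
            Set (AddMonoidAlgebra (ZMod 2) V)))
    ∧ ∀ x ∈ augIdealZ V ^ (n + 1),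
        (red2 V x = 0 ↔ ∃ z ∈ augIdealZ V ^ n, x = 2 * z) := by
  refine ⟨?_, fun x hx => ⟨fun hx0 => ?_, ?_⟩⟩
  · ext y
    rw [← map_red2_augIdealZ, ← Ideal.map_pow, SetLike.mem_coe,
      Ideal.mem_map_iff_of_surjective (red2 V) red2_surjective]
    rfl
  · obtain ⟨w, rfl⟩ := red2_eq_zero_iff.1 hx0
    exact ⟨w, mem_augIdealZ_pow_of_two_mul_mem hx, rfl⟩
  · rintro ⟨z, -, rfl⟩
    exact red2_eq_zero_iff.2 ⟨z, rfl⟩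

/-- For an elementary abelian 2-group `V` and `n > 0`, there is a short exact sequence
`0 → 2·I(V)^n → I(V)^(n+1) → Ī(V)^(n+1) → 0`: the image of `I(V)^(n+1)` under reduction
mod 2 is `Ī(V)^(n+1)`, and the kernel of the reduction restricted to `I(V)^(n+1)` is
`2·I(V)^n`. -/
theorem stmt2 (V : Type) [AddCommGroup V] [Module (ZMod 2) V] (n : ℕ) (hn : 0 < n) :
    (red2 V '' ((augIdealZ V ^ (n + 1) : Ideal (AddMonoidAlgebra ℤ V)) : Set (AddMonoidAlgebra ℤ V))
        = ((augIdeal2 V ^ (n + 1) : Ideal (AddMonoidAlgebra (ZMod 2) V)) :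
            Set (AddMonoidAlgebra (ZMod 2) V)))
    ∧ ∀ x ∈ augIdealZ V ^ (n + 1),
        (red2 V x = 0 ↔ ∃ z ∈ augIdealZ V ^ n, x = 2 * z) :=
  stmt2_general V n
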